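/- arXiv:2506.11583 — 7 statements merged into one kernel-verified Lean document; each statement's English description precedes it below -/
import Mathlib

section
/- The map r : (0,1] × (0,∞)³ → ℝ⁴ defined by r(k, β, γ, μ) = (μ(γ − β), (β/k)(γ + μ), μ, β/k) is injective. Its inverse on its image is given by (k, β, γ, μ) = ((1/σ₄)(σ₂/σ₄ − σ₃ − σ₁/σ₃), σ₂/σ₄ − σ₃ − σ₁/σ₃, σ₂/σ₄ − σ₃, σ₃) where σ = r(k, β, γ, μ). -/
noncomputable def Finv (σ : ℝ × ℝ × ℝ × ℝ) : ℝ × ℝ × ℝ × ℝ :=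
  ((1 / σ.2.2.2) * (σ.2.1 / σ.2.2.2 - σ.2.2.1 - σ.1 / σ.2.2.1),
    σ.2.1 / σ.2.2.2 - σ.2.2.1 - σ.1 / σ.2.2.1,
    σ.2.1 / σ.2.2.2 - σ.2.2.1, σ.2.2.1)

lemma Finv_eq (k β γ μ : ℝ) (hk : k ∈ Set.Ioc (0 : ℝ) 1) (hβ : 0 < β)
    (hγ : 0 < γ) (hμ : 0 < μ) :
    Finv (μ * (γ - β), β / k * (γ + μ), μ, β / k) = (k, β, γ, μ) := by
  obtain ⟨hk0, _⟩ := hk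
  simp only [Finv, Prod.mk.injEq]
  refine ⟨?_, ?_, ?_, trivial⟩ <;> field_simp <;> ring

theorem stmt10 :
    -- r(k, β, γ, μ) = (μ(γ − β), (β/k)(γ + μ), μ, β/k) is injective on
    -- (0,1] × (0,∞)³
    Set.InjOn
      (fun p : ℝ × ℝ × ℝ × ℝ =>
        (p.2.2.2 * (p.2.2.1 - p.2.1), p.2.1 / p.1 * (p.2.2.1 + p.2.2.2),
          p.2.2.2, p.2.1 / p.1))
      {p : ℝ × ℝ × ℝ × ℝ | p.1 ∈ Set.Ioc (0 : ℝ) 1 ∧ 0 < p.2.1 ∧ 0 < p.2.2.1 ∧ 0 < p.2.2.2} ∧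
    -- explicit inverse formula on the image
    ∀ k β γ μ : ℝ, k ∈ Set.Ioc (0 : ℝ) 1 → 0 < β → 0 < γ → 0 < μ →
      (k, β, γ, μ) =
        (let σ₁ := μ * (γ - β); let σ₂ := β / k * (γ + μ); let σ₃ := μ; let σ₄ := β / k
         ((1 / σ₄) * (σ₂ / σ₄ - σ₃ - σ₁ / σ₃), σ₂ / σ₄ - σ₃ - σ₁ / σ₃,
           σ₂ / σ₄ - σ₃, σ₃)) := by
  constructor
  · rintro ⟨k, β, γ, μ⟩ ⟨hk, hβ, hγ, hμ⟩ ⟨k', β', γ', μ'⟩ ⟨hk', hβ', hγ', hμ'⟩ h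
    have h1 := Finv_eq k β γ μ hk hβ hγ hμ
    have h2 := Finv_eq k' β' γ' μ' hk' hβ' hγ' hμ'
    calc (k, β, γ, μ) = Finv (μ * (γ - β), β / k * (γ + μ), μ, β / k) := h1.symm
      _ = Finv (μ' * (γ' - β'), β' / k' * (γ' + μ'), μ', β' / k') := congrArg Finv h
      _ = (k', β', γ', μ') := h2
  · intro k β γ μ hk hβ hγ hμ
    exact (Finv_eq k β γ μ hk hβ hγ hμ).symm
end

section
/- Let (S(t), I(t)) be a solution of the SIRS system Ṡ = −βSI + μ(1−S−I), İ = βSI − γI with β, γ, μ > 0, whose trajectory stays in Ω_θ = {(ξ₁,ξ₂) ∈ [0,1)×(0,1] : ξ₁+ξ₂ ≤ 1} \ {P_e} (in particular I(t) > 0 for all t and (S, I) is not an equilibrium). Then for any interval [a,b), the four functions 1, S(t), I(t), S(t)I(t) are linearly independent on [a,b): if A + B·S(t) + C·I(t) + D·S(t)I(t) = 0 for all t ∈ [a,b), then A = B = C = D = 0. -/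
theorem quartic_aux' (c0 c1 c2 c3 c4 y1 y2 : ℝ) (hne : y1 ≠ y2)
    (h : ∀ y ∈ Set.uIcc y1 y2, c0 + c1 * y + c2 * y ^ 2 + c3 * y ^ 3 + c4 * y ^ 4 = 0) :
    c0 = 0 ∧ c1 = 0 ∧ c2 = 0 ∧ c3 = 0 ∧ c4 = 0 := by
  set p : Polynomial ℝ := Polynomial.C c0 + Polynomial.C c1 * Polynomial.X
    + Polynomial.C c2 * Polynomial.X ^ 2 + Polynomial.C c3 * Polynomial.X ^ 3
    + Polynomial.C c4 * Polynomial.X ^ 4 with hp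
  have hroot : ∀ y ∈ Set.uIcc y1 y2, p.IsRoot y := by
    intro y hy
    have := h y hy
    simp only [hp, Polynomial.IsRoot, Polynomial.eval_add, Polynomial.eval_mul,
      Polynomial.eval_pow, Polynomial.eval_C, Polynomial.eval_X]
    linarith
  have hinf : (Set.uIcc y1 y2).Infinite := by
    rcases hne.lt_or_gt with hlt | hlt
    · exact (Set.Icc_infinite hlt).mono Set.Icc_subset_uIcc
    · exact (Set.Icc_infinite hlt).mono Set.Icc_subset_uIcc'
  have hp0 : p = 0 := p.eq_zero_of_infinite_isRoot (hinf.mono hroot)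
  have hall : ∀ x : ℝ, c0 + c1 * x + c2 * x ^ 2 + c3 * x ^ 3 + c4 * x ^ 4 = 0 := by
    intro x
    have := congrArg (Polynomial.eval x) hp0
    simp only [hp, Polynomial.eval_add, Polynomial.eval_mul, Polynomial.eval_pow,
      Polynomial.eval_C, Polynomial.eval_X, Polynomial.eval_zero] at this
    linarith
  refine ⟨?_, ?_, ?_, ?_, ?_⟩
  · linear_combination hall 0
  · linear_combination (2/3 : ℝ) * hall 1 - (2/3 : ℝ) * hall (-1) - (hall 2) / 12 + (hall (-2)) / 12
  · linear_combination (2/3 : ℝ) * hall 1 + (2/3 : ℝ) * hall (-1) - (5/4 : ℝ) * hall 0 - (hall 2) / 24 - (hall (-2)) / 24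
  · linear_combination (hall 2) / 12 - (hall (-2)) / 12 - (hall 1) / 6 + (hall (-1)) / 6
  · linear_combination (hall 2) / 24 + (hall (-2)) / 24 - (hall 1) / 6 - (hall (-1)) / 6 + (hall 0) / 4

theorem stmt11 (β γ μ : ℝ) (hβ : 0 < β) (hγ : 0 < γ) (hμ : 0 < μ)
    (S I : ℝ → ℝ)
    (hS : ∀ t ∈ Set.Ici (0 : ℝ), HasDerivAt S (-β * S t * I t + μ * (1 - S t - I t)) t)
    (hI : ∀ t ∈ Set.Ici (0 : ℝ), HasDerivAt I (β * S t * I t - γ * I t) t)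
    -- trajectory stays in Ω_θ = Ω₁ \ {P_e}
    (htraj : ∀ t ∈ Set.Ici (0 : ℝ),
      (S t ∈ Set.Ico (0 : ℝ) 1 ∧ I t ∈ Set.Ioc (0 : ℝ) 1 ∧ S t + I t ≤ 1) ∧
      (S t, I t) ≠ (γ / β, μ * (1 - γ / β) / (γ + μ))) :
    ∀ a b : ℝ, 0 ≤ a → a < b → ∀ A B C D : ℝ,
      (∀ t ∈ Set.Ico a b, A + B * S t + C * I t + D * (S t * I t) = 0) →
      A = 0 ∧ B = 0 ∧ C = 0 ∧ D = 0 := by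
  intro a b ha hab A B C D hf
  have hIci : ∀ t ∈ Set.Ioo a b, t ∈ Set.Ici (0 : ℝ) := fun t ht =>
    Set.mem_Ici.mpr (le_trans ha ht.1.le)
  -- Step 1 : S is not constant on (a,b)
  obtain ⟨t1, ht1, t2, ht2, hne⟩ : ∃ t1 ∈ Set.Ioo a b, ∃ t2 ∈ Set.Ioo a b, S t1 ≠ S t2 := by
    by_contra hcon
    push_neg at hcon
    obtain ⟨t0, ht0⟩ : (Set.Ioo a b).Nonempty := Set.nonempty_Ioo.mpr hab
    have ht0' := hIci t0 ht0
    have hSd0 : ∀ t ∈ Set.Ioo a b, -β * S t * I t + μ * (1 - S t - I t) = 0 := by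
      intro t ht
      have hder := hS t (hIci t ht)
      have hev : S =ᶠ[nhds t] fun _ => S t0 := by
        filter_upwards [Ioo_mem_nhds ht.1 ht.2] with x hx
        exact hcon x hx t0 ht0
      exact hder.unique ((hasDerivAt_const t (S t0)).congr_of_eventuallyEq hev)
    have hS0nn : 0 ≤ S t0 := ((htraj t0 ht0').1.1).1
    have hIc : ∀ t ∈ Set.Ioo a b, I t = I t0 := by
      intro t ht
      have h1 := hSd0 t ht
      have h2 := hSd0 t0 ht0
      have hst : S t = S t0 := hcon t ht t0 ht0
      rw [hst] at h1
      have hfac : (β * S t0 + μ) * (I t - I t0) = 0 := by linear_combination h2 - h1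
      have hpos : 0 < β * S t0 + μ := by nlinarith
      rcases mul_eq_zero.mp hfac with h | h
      · exact absurd h hpos.ne'
      · linarith
    have hId0 : β * S t0 * I t0 - γ * I t0 = 0 := by
      have hder := hI t0 ht0'
      have hev : I =ᶠ[nhds t0] fun _ => I t0 := by
        filter_upwards [Ioo_mem_nhds ht0.1 ht0.2] with x hx
        exact hIc x hx
      exact hder.unique ((hasDerivAt_const t0 (I t0)).congr_of_eventuallyEq hev)
    have hIpos : 0 < I t0 := ((htraj t0 ht0').1.2.1).1
    have hbs : β * S t0 = γ := by
      rcases mul_eq_zero.mp (show (β * S t0 - γ) * I t0 = 0 by linear_combination hId0) with h | h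
      · linarith
      · exact absurd h hIpos.ne'
    have hs0 : S t0 = γ / β := by
      rw [eq_div_iff hβ.ne']
      linear_combination hbs
    refine (htraj t0 ht0').2 ?_
    rw [Prod.mk.injEq]
    refine ⟨hs0, ?_⟩
    have h2 := hSd0 t0 ht0
    rw [eq_div_iff (by positivity : γ + μ ≠ 0), ← hs0]
    linear_combination -h2 - I t0 * hbs
  have ht1' := hIci t1 ht1
  have ht2' := hIci t2 ht2
  -- Step 2 : pointwise quartic identity in S t
  have key : ∀ t ∈ Set.Ioo a b,
      (B*C^2*μ - A*C*D*μ + A*C^2*γ + A*B*C*μ - A^2*D*μ)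
      + (B*C*D*μ - B*C^2*μ + B*C^2*γ + B^2*C*μ - A*D^2*μ + A*C*D*μ + 2*A*C*D*γ - A*C^2*β - A*B*D*μ + A*B*C*β - A^2*D*β) * S t
      + (-(B*C*D*μ) + 2*B*C*D*γ - B*C^2*β + B^2*C*β + A*D^2*μ + A*D^2*γ - 2*A*C*D*β - A*B*D*β) * S t ^ 2
      + (B*D^2*γ - 2*B*C*D*β - A*D^2*β) * S t ^ 3
      + (-(B*D^2*β)) * S t ^ 4 = 0 := by
    intro t ht
    have ht' := hIci t ht
    have h1 := hS t ht'
    have h2 := hI t ht'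
    have hft : A + B * S t + C * I t + D * (S t * I t) = 0 := hf t (Set.Ioo_subset_Ico_self ht)
    have hf' : HasDerivAt (fun τ => A + B * S τ + C * I τ + D * (S τ * I τ))
        (0 + B * (-β * S t * I t + μ * (1 - S t - I t)) + C * (β * S t * I t - γ * I t)
          + D * ((-β * S t * I t + μ * (1 - S t - I t)) * I t + S t * (β * S t * I t - γ * I t))) t :=
      (((hasDerivAt_const t A).add (h1.const_mul B)).add (h2.const_mul C)).add
        ((h1.mul h2).const_mul D)
    have h0' : HasDerivAt (fun τ => A + B * S τ + C * I τ + D * (S τ * I τ)) 0 t := by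
      refine (hasDerivAt_const t (0 : ℝ)).congr_of_eventuallyEq ?_
      filter_upwards [Ioo_mem_nhds ht.1 ht.2] with x hx
      exact hf x (Set.Ioo_subset_Ico_self hx)
    have hder := hf'.unique h0'
    linear_combination
      (-(D^2*μ*S t) + D^2*μ*S t*I t + D^2*μ*S t^2 + D^2*γ*S t^2 + D^2*β*S t^2*I t - D^2*β*S t^3
        - C*D*μ + C*D*μ*I t + C*D*μ*S t + 2*C*D*γ*S t + C*D*β*S t*I t - 2*C*D*β*S t^2
        + C^2*γ - C^2*β*S t + B*C*μ + B*C*β*S t - A*D*μ - A*D*β*S t) * hft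
      + (C + D * S t)^2 * hder
  -- Step 3 : IVT, infinite roots, coefficients vanish
  have hsub : Set.uIcc t1 t2 ⊆ Set.Ioo a b := Set.ordConnected_Ioo.uIcc_subset ht1 ht2
  have hScont : ContinuousOn S (Set.uIcc t1 t2) := fun x hx =>
    ((hS x (hIci x (hsub hx))).differentiableAt.continuousAt).continuousWithinAt
  have hIVT : ∀ y ∈ Set.uIcc (S t1) (S t2),
      (B*C^2*μ - A*C*D*μ + A*C^2*γ + A*B*C*μ - A^2*D*μ)
      + (B*C*D*μ - B*C^2*μ + B*C^2*γ + B^2*C*μ - A*D^2*μ + A*C*D*μ + 2*A*C*D*γ - A*C^2*β - A*B*D*μ + A*B*C*β - A^2*D*β) * y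
      + (-(B*C*D*μ) + 2*B*C*D*γ - B*C^2*β + B^2*C*β + A*D^2*μ + A*D^2*γ - 2*A*C*D*β - A*B*D*β) * y ^ 2
      + (B*D^2*γ - 2*B*C*D*β - A*D^2*β) * y ^ 3
      + (-(B*D^2*β)) * y ^ 4 = 0 := by
    intro y hy
    obtain ⟨x, hx, rfl⟩ := intermediate_value_uIcc hScont hy
    exact key x (hsub hx)
  obtain ⟨h0c, h1c, h2c, h3c, h4c⟩ := quartic_aux' _ _ _ _ _ _ _ hne hIVT
  -- Step 4 : case analysis on coefficients
  have hft1 : A + B * S t1 + C * I t1 + D * (S t1 * I t1) = 0 := hf t1 (Set.Ioo_subset_Ico_self ht1)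
  have hft2 : A + B * S t2 + C * I t2 + D * (S t2 * I t2) = 0 := hf t2 (Set.Ioo_subset_Ico_self ht2)
  have hI1 : 0 < I t1 := ((htraj t1 ht1').1.2.1).1
  have hI2 : 0 < I t2 := ((htraj t2 ht2').1.2.1).1
  by_cases hD : D = 0
  · subst hD
    by_cases hB : B = 0
    · subst hB
      have hAC : A * C ^ 2 = 0 := by
        have h : β * (A * C ^ 2) = 0 := by linear_combination -h1c
        exact (mul_eq_zero.mp h).resolve_left hβ.ne'
      rcases mul_eq_zero.mp hAC with hA | hC2
      · subst hA
        have hCI : C * I t1 = 0 := by linear_combination hft1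
        have hC : C = 0 := (mul_eq_zero.mp hCI).resolve_right hI1.ne'
        exact ⟨rfl, rfl, hC, rfl⟩
      · have hC : C = 0 := pow_eq_zero_iff (two_ne_zero) |>.mp hC2
        subst hC
        have hA : A = 0 := by linear_combination hft1
        exact ⟨hA, rfl, rfl, rfl⟩
    · exfalso
      have hBC : B * C * (B - C) = 0 := by
        have h : β * (B * C * (B - C)) = 0 := by linear_combination h2c
        exact (mul_eq_zero.mp h).resolve_left hβ.ne'
      rcases mul_eq_zero.mp hBC with hBC' | hBmC
      · rcases mul_eq_zero.mp hBC' with hB' | hC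
        · exact hB hB'
        · subst hC
          have h : B * (S t1 - S t2) = 0 := by linear_combination hft1 - hft2
          rcases mul_eq_zero.mp h with h | h
          · exact hB h
          · exact hne (by linarith)
      · have hC : C = B := by linarith
        subst hC
        have h3 : γ * C ^ 3 = 0 := by linear_combination h1c
        have hC3 : C ^ 3 = 0 := (mul_eq_zero.mp h3).resolve_left hγ.ne'
        exact hB (pow_eq_zero_iff (three_ne_zero) |>.mp hC3)
  · exfalso
    have hD2 : D ^ 2 ≠ 0 := pow_ne_zero 2 hD
    have hB : B = 0 := by
      have h : β * (B * D ^ 2) = 0 := by linear_combination -h4c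
      have h' := (mul_eq_zero.mp h).resolve_left hβ.ne'
      exact (mul_eq_zero.mp h').resolve_right hD2
    subst hB
    have hA : A = 0 := by
      have h : β * (A * D ^ 2) = 0 := by linear_combination -h3c
      have h' := (mul_eq_zero.mp h).resolve_left hβ.ne'
      exact (mul_eq_zero.mp h').resolve_right hD2
    subst hA
    have hu1 : C + D * S t1 = 0 := by
      have h : (C + D * S t1) * I t1 = 0 := by linear_combination hft1
      exact (mul_eq_zero.mp h).resolve_right hI1.ne'
    have hu2 : C + D * S t2 = 0 := by
      have h : (C + D * S t2) * I t2 = 0 := by linear_combination hft2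
      exact (mul_eq_zero.mp h).resolve_right hI2.ne'
    have h : D * (S t1 - S t2) = 0 := by linear_combination hu1 - hu2
    rcases mul_eq_zero.mp h with h | h
    · exact hD h
    · exact hne (by linarith)
end

section
/- Along any solution of the SIR system Ṡ = −βSI, İ = βSI − γI with I > 0 on the interval considered, the output y = kI satisfies ÿ − ẏ²/y = −(βγ/k)y² − (β/k)·yẏ; equivalently d/dt(ẏ/y) + (βγ/k)y + (β/k)ẏ = 0. -/
theorem stmt13 (k β γ a b : ℝ) (hk : k ∈ Set.Ioc (0 : ℝ) 1)
    (hβ : 0 < β) (hγ : 0 < γ) (hab : a < b)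
    (S I : ℝ → ℝ)
    (hS : ∀ t ∈ Set.Ioo a b, HasDerivAt S (-β * S t * I t) t)
    (hI : ∀ t ∈ Set.Ioo a b, HasDerivAt I (β * S t * I t - γ * I t) t)
    (hIpos : ∀ t ∈ Set.Ioo a b, 0 < I t) :
    ∀ t ∈ Set.Ioo a b,
      deriv (deriv (fun s => k * I s)) t - (deriv (fun s => k * I s) t) ^ 2 / (k * I t) =
        -(β * γ / k) * (k * I t) ^ 2
          - (β / k) * ((k * I t) * deriv (fun s => k * I s) t) ∧
      deriv (fun s => deriv (fun u => k * I u) s / (k * I s)) t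
          + (β * γ / k) * (k * I t) + (β / k) * deriv (fun s => k * I s) t = 0 := by
  intro t ht
  have hk0 : (0:ℝ) < k := hk.1
  have hkne : k ≠ 0 := ne_of_gt hk0
  have hy' : ∀ s ∈ Set.Ioo a b,
      HasDerivAt (fun u => k * I u) (k * (β * S s * I s - γ * I s)) s := by
    intro s hs
    exact (hI s hs).const_mul k
  have hderiv_eq : ∀ s ∈ Set.Ioo a b,
      deriv (fun u => k * I u) s = k * (β * S s * I s - γ * I s) := by
    intro s hs
    exact (hy' s hs).deriv
  have hmem : Set.Ioo a b ∈ nhds t := isOpen_Ioo.mem_nhds ht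
  have hev : (deriv (fun u => k * I u)) =ᶠ[nhds t]
      (fun s => k * (β * S s * I s - γ * I s)) :=
    Filter.eventuallyEq_of_mem hmem hderiv_eq
  have hIt := hIpos t ht
  have hItne : I t ≠ 0 := ne_of_gt hIt
  -- second derivative
  have hg : HasDerivAt (fun s => k * (β * S s * I s - γ * I s))
      (k * ((β * (-β * S t * I t)) * I t + (β * S t) * (β * S t * I t - γ * I t)
        - γ * (β * S t * I t - γ * I t))) t := by
    exact ((((hS t ht).const_mul β).mul (hI t ht)).sub ((hI t ht).const_mul γ)).const_mul k
  have hd2 : deriv (deriv (fun u => k * I u)) t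
      = k * ((β * (-β * S t * I t)) * I t + (β * S t) * (β * S t * I t - γ * I t)
        - γ * (β * S t * I t - γ * I t)) := by
    rw [hev.deriv_eq]
    exact hg.deriv
  have hd1 : deriv (fun u => k * I u) t = k * (β * S t * I t - γ * I t) :=
    hderiv_eq t ht
  constructor
  · rw [hd2, hd1]
    field_simp
    ring
  · -- the ratio equals β * S s - γ on the interval
    have hev2 : (fun s => deriv (fun u => k * I u) s / (k * I s)) =ᶠ[nhds t]
        (fun s => β * S s - γ) := by
      apply Filter.eventuallyEq_of_mem hmem
      intro s hs
      have h1 := hderiv_eq s hs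
      have hIs := ne_of_gt (hIpos s hs)
      simp only [h1]
      field_simp
    have hr : HasDerivAt (fun s => β * S s - γ) (β * (-β * S t * I t)) t :=
      ((hS t ht).const_mul β).sub_const γ
    rw [hev2.deriv_eq, hr.deriv, hd1]
    field_simp
    ring
end

section
/- The SIR system Ṡ = −βSI, İ = βSI − γI with output y = kI is identifiable on Θ = (0,1] × (0,∞)² in any semi-open interval [a,b) ⊆ [0,∞) with initial conditions in Ω̃ = {(ξ₁, ξ₂) ∈ (0,1)² : ξ₁ + ξ₂ ≤ 1}: if a fixed initial condition (S₀, I₀) ∈ Ω̃ produces the same output y on [a,b) under two parameter vectors (k, β, γ) and (k', β', γ'), then (k, β, γ) = (k', β', γ'). -/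
open Set intervalIntegral Metric

/-- helper: positivity for linear ODE x' = c x with continuous coefficient -/
lemma ode_pos (c x : ℝ → ℝ) (hc : Continuous c)
    (hx : ∀ t ∈ Set.Ici (0:ℝ), HasDerivAt x (c t * x t) t)
    (h0 : 0 < x 0) : ∀ t ∈ Set.Ici (0:ℝ), 0 < x t := by
  intro T hT
  set F : ℝ → ℝ := fun t => ∫ s in (0:ℝ)..t, c s with hFdef
  have hF : ∀ t : ℝ, HasDerivAt F (c t) t := fun t =>
    integral_hasDerivAt_right (hc.intervalIntegrable _ _)
      (hc.stronglyMeasurableAtFilter _ _) hc.continuousAt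
  set g : ℝ → ℝ := fun t => x t * Real.exp (-F t) with hgdef
  have hg : ∀ t ∈ Set.Ici (0:ℝ), HasDerivAt g 0 t := by
    intro t ht
    have h : HasDerivAt (fun y => x y * Real.exp (-F y))
        (c t * x t * Real.exp (-F t) + x t * (Real.exp (-F t) * -c t)) t :=
      HasDerivAt.fun_mul (hx t ht) ((hF t).neg.exp)
    convert h using 1
    ring
  have hconst := constant_of_has_deriv_right_zero (f := g) (a := 0) (b := T)
    (fun u hu => ((hg u hu.1).continuousAt).continuousWithinAt)
    (fun u hu => (hg u hu.1).hasDerivWithinAt)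
  have hT' := hconst T ⟨hT, le_refl T⟩
  have h00 : g 0 = x 0 := by simp [hgdef, hFdef]
  have hexp : 0 < Real.exp (-F T) := Real.exp_pos _
  have : x T * Real.exp (-F T) = x 0 := by rw [← h00, ← hT']
  nlinarith

/-- helper: |x*y - u*v| bound -/
lemma abs_mul_sub_mul_le (x y u v R d : ℝ) (hx : |x| ≤ R) (hv : |v| ≤ R)
    (h1 : |x - u| ≤ d) (h2 : |y - v| ≤ d) : |x*y - u*v| ≤ R*d + R*d := by
  have hR : 0 ≤ R := (abs_nonneg x).trans hx
  have hd : 0 ≤ d := (abs_nonneg _).trans h1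
  have e : x*y - u*v = x*(y-v) + v*(x-u) := by ring
  rw [e]
  calc |x*(y-v) + v*(x-u)| ≤ |x*(y-v)| + |v*(x-u)| := abs_add_le _ _
    _ = |x| * |y-v| + |v| * |x-u| := by rw [abs_mul, abs_mul]
    _ ≤ R*d + R*d := add_le_add (mul_le_mul hx h2 (abs_nonneg _) hR)
        (mul_le_mul hv h1 (abs_nonneg _) hR)

set_option maxHeartbeats 1000000 in
theorem stmt15 (k β γ k' β' γ' : ℝ)
    (hk : k ∈ Set.Ioc (0 : ℝ) 1) (hβ : 0 < β) (hγ : 0 < γ)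
    (hk' : k' ∈ Set.Ioc (0 : ℝ) 1) (hβ' : 0 < β') (hγ' : 0 < γ')
    (S I S' I' : ℝ → ℝ)
    -- solution with parameters (k, β, γ)
    (hS : ∀ t ∈ Set.Ici (0 : ℝ), HasDerivAt S (-β * S t * I t) t)
    (hI : ∀ t ∈ Set.Ici (0 : ℝ), HasDerivAt I (β * S t * I t - γ * I t) t)
    -- solution with parameters (k', β', γ')
    (hS' : ∀ t ∈ Set.Ici (0 : ℝ), HasDerivAt S' (-β' * S' t * I' t) t)
    (hI' : ∀ t ∈ Set.Ici (0 : ℝ), HasDerivAt I' (β' * S' t * I' t - γ' * I' t) t)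
    -- same (known) initial condition (S₀, I₀) ∈ Ω̃
    (hIC : S 0 = S' 0 ∧ I 0 = I' 0)
    (hICmem : S 0 ∈ Set.Ioo (0 : ℝ) 1 ∧ I 0 ∈ Set.Ioo (0 : ℝ) 1 ∧ S 0 + I 0 ≤ 1)
    (a b : ℝ) (ha : 0 ≤ a) (hab : a < b)
    -- identical outputs y = kI on [a, b)
    (hout : ∀ t ∈ Set.Ico a b, k * I t = k' * I' t) :
    k = k' ∧ β = β' ∧ γ = γ' := by
  obtain ⟨hk0, hk1⟩ := hk
  obtain ⟨hk0', hk1'⟩ := hk'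
  obtain ⟨hSS', hII'⟩ := hIC
  have hS0 : 0 < S 0 := hICmem.1.1
  have hI0 : 0 < I 0 := hICmem.2.1.1
  have hS0' : 0 < S' 0 := hSS' ▸ hS0
  have hI0' : 0 < I' 0 := hII' ▸ hI0
  have hmax : Continuous fun t : ℝ => max t 0 := continuous_id.max continuous_const
  -- positivity of I
  have hIpos : ∀ t ∈ Set.Ici (0:ℝ), 0 < I t := by
    refine ode_pos (fun t => β * S (max t 0) - γ) I ?_ ?_ hI0
    · refine (continuous_const.mul ?_).sub continuous_const
      refine continuous_iff_continuousAt.mpr fun t => ?_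
      have : ContinuousAt (S ∘ fun u : ℝ => max u 0) t :=
        ContinuousAt.comp (g := S) (f := fun u : ℝ => max u 0) (x := t)
          ((hS _ (le_max_right t 0)).continuousAt) hmax.continuousAt
      exact this
    · intro t ht
      have h := hI t ht
      show HasDerivAt I ((β * S (max t 0) - γ) * I t) t
      rw [max_eq_left ht]
      convert h using 1
      ring
  have hIpos' : ∀ t ∈ Set.Ici (0:ℝ), 0 < I' t := by
    refine ode_pos (fun t => β' * S' (max t 0) - γ') I' ?_ ?_ hI0'
    · refine (continuous_const.mul ?_).sub continuous_const
      refine continuous_iff_continuousAt.mpr fun t => ?_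
      have : ContinuousAt (S' ∘ fun u : ℝ => max u 0) t :=
        ContinuousAt.comp (g := S') (f := fun u : ℝ => max u 0) (x := t)
          ((hS' _ (le_max_right t 0)).continuousAt) hmax.continuousAt
      exact this
    · intro t ht
      have h := hI' t ht
      show HasDerivAt I' ((β' * S' (max t 0) - γ') * I' t) t
      rw [max_eq_left ht]
      convert h using 1
      ring
  -- positivity of S
  have hSpos : ∀ t ∈ Set.Ici (0:ℝ), 0 < S t := by
    refine ode_pos (fun t => -(β * I (max t 0))) S ?_ ?_ hS0
    · refine (continuous_const.mul ?_).neg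
      refine continuous_iff_continuousAt.mpr fun t => ?_
      have : ContinuousAt (I ∘ fun u : ℝ => max u 0) t :=
        ContinuousAt.comp (g := I) (f := fun u : ℝ => max u 0) (x := t)
          ((hI _ (le_max_right t 0)).continuousAt) hmax.continuousAt
      exact this
    · intro t ht
      have h := hS t ht
      show HasDerivAt S (-(β * I (max t 0)) * S t) t
      rw [max_eq_left ht]
      convert h using 1
      ring
  have hSpos' : ∀ t ∈ Set.Ici (0:ℝ), 0 < S' t := by
    refine ode_pos (fun t => -(β' * I' (max t 0))) S' ?_ ?_ hS0'
    · refine (continuous_const.mul ?_).neg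
      refine continuous_iff_continuousAt.mpr fun t => ?_
      have : ContinuousAt (I' ∘ fun u : ℝ => max u 0) t :=
        ContinuousAt.comp (g := I') (f := fun u : ℝ => max u 0) (x := t)
          ((hI' _ (le_max_right t 0)).continuousAt) hmax.continuousAt
      exact this
    · intro t ht
      have h := hS' t ht
      show HasDerivAt S' (-(β' * I' (max t 0)) * S' t) t
      rw [max_eq_left ht]
      convert h using 1
      ring
  have hknz : k ≠ 0 := ne_of_gt hk0
  have hknz' : k' ≠ 0 := ne_of_gt hk0'
  -- E1 : βS - γ = β'S' - γ' on Ioo a b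
  have heq1 : ∀ t ∈ Set.Ioo a b, β * S t - γ = β' * S' t - γ' := by
    intro t ht
    have ht0 : t ∈ Set.Ici (0:ℝ) := ha.trans ht.1.le
    have hnb : Set.Ioo a b ∈ nhds t := isOpen_Ioo.mem_nhds ht
    have hEq : (fun u => k * I u) =ᶠ[nhds t] (fun u => k' * I' u) :=
      Filter.eventually_of_mem hnb fun u hu => hout u (Set.Ioo_subset_Ico_self hu)
    have d1 : HasDerivAt (fun u => k * I u) (k * (β * S t * I t - γ * I t)) t :=
      (hI t ht0).const_mul k
    have d2 : HasDerivAt (fun u => k' * I' u) (k' * (β' * S' t * I' t - γ' * I' t)) t :=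
      (hI' t ht0).const_mul k'
    have d2' : HasDerivAt (fun u => k * I u) (k' * (β' * S' t * I' t - γ' * I' t)) t :=
      d2.congr_of_eventuallyEq hEq
    have hder := d1.unique d2'
    have hy := hout t (Set.Ioo_subset_Ico_self ht)
    have hIt : 0 < I t := hIpos t ht0
    have hc : (k * I t) * ((β * S t - γ) - (β' * S' t - γ')) = 0 := by
      linear_combination hder - (β' * S' t - γ') * hy
    rcases mul_eq_zero.mp hc with h | h
    · exact absurd h (ne_of_gt (mul_pos hk0 hIt))
    · linarith
  -- E2 : (β/k)(βS) = (β'/k')(β'S') on Ioo a b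
  have heq2 : ∀ t ∈ Set.Ioo a b, (β/k) * (β * S t) = (β'/k') * (β' * S' t) := by
    intro t ht
    have ht0 : t ∈ Set.Ici (0:ℝ) := ha.trans ht.1.le
    have hnb : Set.Ioo a b ∈ nhds t := isOpen_Ioo.mem_nhds ht
    have hEq : (fun u => (β * S u - γ) - (β' * S' u - γ')) =ᶠ[nhds t] (fun _ => (0:ℝ)) :=
      Filter.eventually_of_mem hnb fun u hu => sub_eq_zero_of_eq (heq1 u hu)
    have d1 : HasDerivAt (fun u => (β * S u - γ) - (β' * S' u - γ'))
        (β * (-β * S t * I t) - β' * (-β' * S' t * I' t)) t :=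
      (((hS t ht0).const_mul β).sub_const γ).sub (((hS' t ht0).const_mul β').sub_const γ')
    have d0 : HasDerivAt (fun u => (β * S u - γ) - (β' * S' u - γ')) 0 t :=
      (hasDerivAt_const t (0:ℝ)).congr_of_eventuallyEq hEq
    have hder := d1.unique d0
    have hy := hout t (Set.Ioo_subset_Ico_self ht)
    have hIt : 0 < I t := hIpos t ht0
    have e1 : (k * I t) * ((β/k) * (β * S t)) = β^2 * S t * I t := by
      field_simp
    have e2 : (k * I t) * ((β'/k') * (β' * S' t)) = β'^2 * S' t * I' t := by
      rw [hy]; field_simp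
    have hc : (k * I t) * ((β/k) * (β * S t) - (β'/k') * (β' * S' t)) = 0 := by
      linear_combination e1 - e2 - hder
    rcases mul_eq_zero.mp hc with h | h
    · exact absurd h (ne_of_gt (mul_pos hk0 hIt))
    · linarith
  -- E3 : (β/k)²(βS) = (β'/k')²(β'S') on Ioo a b
  have heq3 : ∀ t ∈ Set.Ioo a b, (β/k)^2 * (β * S t) = (β'/k')^2 * (β' * S' t) := by
    intro t ht
    have ht0 : t ∈ Set.Ici (0:ℝ) := ha.trans ht.1.le
    have hnb : Set.Ioo a b ∈ nhds t := isOpen_Ioo.mem_nhds ht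
    have hEq : (fun u => (β/k) * (β * S u) - (β'/k') * (β' * S' u)) =ᶠ[nhds t]
        (fun _ => (0:ℝ)) :=
      Filter.eventually_of_mem hnb fun u hu => sub_eq_zero_of_eq (heq2 u hu)
    have d1 : HasDerivAt (fun u => (β/k) * (β * S u) - (β'/k') * (β' * S' u))
        ((β/k) * (β * (-β * S t * I t)) - (β'/k') * (β' * (-β' * S' t * I' t))) t :=
      (((hS t ht0).const_mul β).const_mul (β/k)).sub
        (((hS' t ht0).const_mul β').const_mul (β'/k'))
    have d0 : HasDerivAt (fun u => (β/k) * (β * S u) - (β'/k') * (β' * S' u)) 0 t :=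
      (hasDerivAt_const t (0:ℝ)).congr_of_eventuallyEq hEq
    have hder := d1.unique d0
    have hy := hout t (Set.Ioo_subset_Ico_self ht)
    have hIt : 0 < I t := hIpos t ht0
    have e1 : (k * I t) * ((β/k)^2 * (β * S t)) = (β/k) * (β^2 * S t * I t) := by
      field_simp
    have e2 : (k * I t) * ((β'/k')^2 * (β' * S' t)) = (β'/k') * (β'^2 * S' t * I' t) := by
      rw [hy]; field_simp
    have hc : (k * I t) * ((β/k)^2 * (β * S t) - (β'/k')^2 * (β' * S' t)) = 0 := by
      linear_combination e1 - e2 - hder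
    rcases mul_eq_zero.mp hc with h | h
    · exact absurd h (ne_of_gt (mul_pos hk0 hIt))
    · linarith
  -- midpoint
  set m : ℝ := (a + b) / 2 with hmdef
  have hm : m ∈ Set.Ioo a b := ⟨by simp only [hmdef]; linarith, by simp only [hmdef]; linarith⟩
  have hm0 : (0:ℝ) ≤ m := ha.trans hm.1.le
  have hXm : 0 < β * S m := mul_pos hβ (hSpos m hm0)
  have hσpos : 0 < β / k := div_pos hβ hk0
  have hσpos' : 0 < β' / k' := div_pos hβ' hk0'
  have hσ : β / k = β' / k' := by
    have h2 := heq2 m hm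
    have h3 := heq3 m hm
    have key : (β/k) * ((β/k) * (β * S m)) = (β'/k') * ((β/k) * (β * S m)) := by
      calc (β/k) * ((β/k) * (β * S m)) = (β/k)^2 * (β * S m) := by ring
        _ = (β'/k')^2 * (β' * S' m) := h3
        _ = (β'/k') * ((β'/k') * (β' * S' m)) := by ring
        _ = (β'/k') * ((β/k) * (β * S m)) := by rw [h2]
    exact mul_right_cancel₀ (ne_of_gt (mul_pos hσpos hXm)) key
  have hXeq : ∀ t ∈ Set.Ioo a b, β * S t = β' * S' t := by
    intro t ht
    have h2 := heq2 t ht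
    rw [hσ] at h2
    exact mul_left_cancel₀ (ne_of_gt hσpos') h2
  have hγγ' : γ = γ' := by
    have h1 := heq1 m hm
    have h2 := hXeq m hm
    linarith
  -- ODE uniqueness backward on [0, m]
  set f : ℝ → ℝ × ℝ := fun t => (β * S t, k * I t) with hfdef
  set g : ℝ → ℝ × ℝ := fun t => (β' * S' t, k' * I' t) with hgdef
  have hfc : ContinuousOn f (Set.Icc 0 m) := by
    intro t ht
    exact (ContinuousAt.prodMk ((hS t ht.1).continuousAt.const_mul β)
      ((hI t ht.1).continuousAt.const_mul k)).continuousWithinAt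
  have hgc : ContinuousOn g (Set.Icc 0 m) := by
    intro t ht
    exact (ContinuousAt.prodMk ((hS' t ht.1).continuousAt.const_mul β')
      ((hI' t ht.1).continuousAt.const_mul k')).continuousWithinAt
  obtain ⟨C1, hC1⟩ := isCompact_Icc.exists_bound_of_continuousOn hfc
  obtain ⟨C2, hC2⟩ := isCompact_Icc.exists_bound_of_continuousOn hgc
  set R : ℝ := max (max C1 C2) 0 with hRdef
  have hR0 : 0 ≤ R := le_max_right _ _
  have hfR : ∀ t ∈ Set.Icc (0:ℝ) m, ‖f t‖ ≤ R :=
    fun t ht => (hC1 t ht).trans ((le_max_left C1 C2).trans (le_max_left _ _))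
  have hgR : ∀ t ∈ Set.Icc (0:ℝ) m, ‖g t‖ ≤ R :=
    fun t ht => (hC2 t ht).trans ((le_max_right C1 C2).trans (le_max_left _ _))
  set Kr : ℝ := 2 * (β/k) * R + 2 * R + γ with hKrdef
  have hKr0 : 0 ≤ Kr := by positivity
  set v : ℝ → ℝ × ℝ → ℝ × ℝ := fun _ p => (-(β/k) * p.1 * p.2, p.2 * (p.1 - γ)) with hvdef
  have hv : ∀ t : ℝ, LipschitzOnWith Kr.toNNReal (v t) (Metric.closedBall (0 : ℝ × ℝ) R) := by
    intro t
    rw [lipschitzOnWith_iff_dist_le_mul]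
    intro p hp q hq
    have hpn : ‖p‖ ≤ R := by rwa [Metric.mem_closedBall, dist_zero_right] at hp
    have hqn : ‖q‖ ≤ R := by rwa [Metric.mem_closedBall, dist_zero_right] at hq
    have hp1 : |p.1| ≤ R := (norm_fst_le p).trans hpn
    have hp2 : |p.2| ≤ R := (norm_snd_le p).trans hpn
    have hq1 : |q.1| ≤ R := (norm_fst_le q).trans hqn
    have hq2 : |q.2| ≤ R := (norm_snd_le q).trans hqn
    set d : ℝ := dist p q with hddef
    have hd0 : 0 ≤ d := dist_nonneg
    have h1 : |p.1 - q.1| ≤ d := by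
      rw [← Real.dist_eq, hddef, Prod.dist_eq]; exact le_max_left _ _
    have h2 : |p.2 - q.2| ≤ d := by
      rw [← Real.dist_eq, hddef, Prod.dist_eq]; exact le_max_right _ _
    have habs : |p.1 * p.2 - q.1 * q.2| ≤ R * d + R * d :=
      abs_mul_sub_mul_le p.1 p.2 q.1 q.2 R d hp1 hq2 h1 h2
    have hKrd : (Kr.toNNReal : ℝ) = Kr := Real.coe_toNNReal Kr hKr0
    rw [Prod.dist_eq]
    rw [hKrd]
    apply max_le
    · -- first component
      have e : -(β/k) * p.1 * p.2 - (-(β/k) * q.1 * q.2)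
          = -((β/k) * (p.1 * p.2 - q.1 * q.2)) := by ring
      rw [Real.dist_eq, e, abs_neg, abs_mul, abs_of_nonneg hσpos.le]
      nlinarith [mul_le_mul_of_nonneg_left habs hσpos.le, mul_nonneg hγ.le hd0,
        mul_nonneg (mul_nonneg (by norm_num : (0:ℝ) ≤ 2) hR0) hd0]
    · -- second component
      have e : p.2 * (p.1 - γ) - q.2 * (q.1 - γ)
          = (p.1 * p.2 - q.1 * q.2) - γ * (p.2 - q.2) := by ring
      rw [Real.dist_eq, e]
      have htri : |(p.1 * p.2 - q.1 * q.2) - γ * (p.2 - q.2)|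
          ≤ |p.1 * p.2 - q.1 * q.2| + |γ * (p.2 - q.2)| := abs_sub _ _
      have hg2 : |γ * (p.2 - q.2)| ≤ γ * d := by
        rw [abs_mul, abs_of_nonneg hγ.le]
        exact mul_le_mul_of_nonneg_left h2 hγ.le
      rw [hKrdef]
      nlinarith [mul_nonneg (mul_nonneg (mul_nonneg (by norm_num : (0:ℝ) ≤ 2) hσpos.le) hR0) hd0]
  have hf' : ∀ t ∈ Set.Ioc (0:ℝ) m, HasDerivWithinAt f (v t (f t)) (Set.Iic t) t := by
    intro t ht
    have ht0 : t ∈ Set.Ici (0:ℝ) := ht.1.le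
    have hd : HasDerivAt f (β * (-β * S t * I t), k * (β * S t * I t - γ * I t)) t :=
      HasDerivAt.prodMk ((hS t ht0).const_mul β) ((hI t ht0).const_mul k)
    have he1 : β * (-β * S t * I t) = -(β/k) * (β * S t) * (k * I t) := by
      field_simp
    have he2 : k * (β * S t * I t - γ * I t) = (k * I t) * ((β * S t) - γ) := by ring
    have he : (β * (-β * S t * I t), k * (β * S t * I t - γ * I t)) = v t (f t) := by
      simp only [hvdef, hfdef]
      exact Prod.ext he1 he2
    have := hd.hasDerivWithinAt (s := Set.Iic t)
    rwa [he] at this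
  have hg' : ∀ t ∈ Set.Ioc (0:ℝ) m, HasDerivWithinAt g (v t (g t)) (Set.Iic t) t := by
    intro t ht
    have ht0 : t ∈ Set.Ici (0:ℝ) := ht.1.le
    have hd : HasDerivAt g (β' * (-β' * S' t * I' t), k' * (β' * S' t * I' t - γ' * I' t)) t :=
      HasDerivAt.prodMk ((hS' t ht0).const_mul β') ((hI' t ht0).const_mul k')
    have he1 : β' * (-β' * S' t * I' t) = -(β/k) * (β' * S' t) * (k' * I' t) := by
      rw [hσ]; field_simp
    have he2 : k' * (β' * S' t * I' t - γ' * I' t) = (k' * I' t) * ((β' * S' t) - γ) := by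
      rw [hγγ']; ring
    have he : (β' * (-β' * S' t * I' t), k' * (β' * S' t * I' t - γ' * I' t)) = v t (g t) := by
      simp only [hvdef, hgdef]
      exact Prod.ext he1 he2
    have := hd.hasDerivWithinAt (s := Set.Iic t)
    rwa [he] at this
  have hfs : ∀ t ∈ Set.Ioc (0:ℝ) m, f t ∈ Metric.closedBall (0 : ℝ × ℝ) R := by
    intro t ht
    rw [Metric.mem_closedBall, dist_zero_right]
    exact hfR t ⟨ht.1.le, ht.2⟩
  have hgs : ∀ t ∈ Set.Ioc (0:ℝ) m, g t ∈ Metric.closedBall (0 : ℝ × ℝ) R := by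
    intro t ht
    rw [Metric.mem_closedBall, dist_zero_right]
    exact hgR t ⟨ht.1.le, ht.2⟩
  have hb' : f m = g m := by
    simp only [hfdef, hgdef]
    exact Prod.ext (hXeq m hm) (hout m ⟨hm.1.le, hm.2⟩)
  have huniq := ODE_solution_unique_of_mem_Icc_left (fun t _ => hv t) hfc hf' hfs hgc hg' hgs hb'
  have h0 : f 0 = g 0 := huniq ⟨le_refl 0, hm0⟩
  have h01 : β * S 0 = β' * S' 0 := congrArg Prod.fst h0
  rw [← hSS'] at h01
  have hββ' : β = β' := mul_right_cancel₀ (ne_of_gt hS0) h01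
  have hkk' : k = k' := by
    rw [hββ'] at hσ
    field_simp at hσ
    exact hσ.symm
  exact ⟨hkk', hββ', hγγ'⟩
end

section
/- The SIRV system Ṡ = −βSI − νS, İ = βSI − γI, V̇ = νS with β, γ, ν > 0 leaves the set Ω = {(ξ₁, ξ₂, ξ₃) ∈ (0,1] × (0,1) × [0,1) : ξ₁ + ξ₂ + ξ₃ ≤ 1} positively invariant, and along its solutions the output y = ν(1 − V) satisfies ẏ = −ν²S and ÿ = −ẏ(βI + ν); in particular, on Ω one has ẏ < 0 and S = −ẏ/ν², I = −(ÿ/ẏ + ν)/β, V = 1 − y/ν. -/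
/-- Positivity from a linear ODE `S' = f · S` with continuous coefficient. -/
lemma pos_of_linear_ode (f : ℝ → ℝ) (hf : Continuous f) (S : ℝ → ℝ)
    (hS : ∀ t, HasDerivAt S (f t * S t) t) (h0 : 0 < S 0) : ∀ t, 0 < S t := by
  set F : ℝ → ℝ := fun t => ∫ s in (0:ℝ)..t, f s with hFdef
  have hF : ∀ t, HasDerivAt F (f t) t := fun t =>
    intervalIntegral.integral_hasDerivAt_right (hf.intervalIntegrable _ _)
      hf.aestronglyMeasurable.stronglyMeasurableAtFilter hf.continuousAt
  have hg : ∀ t, HasDerivAt (fun t => S t * Real.exp (-F t)) 0 t := by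
    intro t
    have h1 := (hS t).mul ((hF t).neg.exp)
    refine (h1 : HasDerivAt (fun t => S t * Real.exp (-F t)) _ t).congr_deriv ?_
    ring
  have hconst : ∀ t, S t * Real.exp (-F t) = S 0 * Real.exp (-F 0) :=
    fun t => is_const_of_deriv_eq_zero (fun t => (hg t).differentiableAt)
      (fun t => (hg t).deriv) t 0
  intro t
  have h := hconst t
  nlinarith [Real.exp_pos (-F t), Real.exp_pos (-F 0), mul_pos h0 (Real.exp_pos (-F 0))]

theorem stmt17 (β γ ν : ℝ) (hβ : 0 < β) (hγ : 0 < γ) (hν : 0 < ν)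
    (S I V : ℝ → ℝ)
    (hS : ∀ t : ℝ, HasDerivAt S (-β * S t * I t - ν * S t) t)
    (hI : ∀ t : ℝ, HasDerivAt I (β * S t * I t - γ * I t) t)
    (hV : ∀ t : ℝ, HasDerivAt V (ν * S t) t)
    (h0 : S 0 ∈ Set.Ioc (0 : ℝ) 1 ∧ I 0 ∈ Set.Ioo (0 : ℝ) 1 ∧ V 0 ∈ Set.Ico (0 : ℝ) 1 ∧
      S 0 + I 0 + V 0 ≤ 1) :
    ∀ t ≥ (0 : ℝ),
      (S t ∈ Set.Ioc (0 : ℝ) 1 ∧ I t ∈ Set.Ioo (0 : ℝ) 1 ∧ V t ∈ Set.Ico (0 : ℝ) 1 ∧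
        S t + I t + V t ≤ 1) ∧
      deriv (fun s => ν * (1 - V s)) t = -ν ^ 2 * S t ∧
      deriv (deriv (fun s => ν * (1 - V s))) t =
        -(deriv (fun s => ν * (1 - V s)) t) * (β * I t + ν) ∧
      deriv (fun s => ν * (1 - V s)) t < 0 ∧
      S t = -(deriv (fun s => ν * (1 - V s)) t) / ν ^ 2 ∧
      I t = -((deriv (deriv (fun s => ν * (1 - V s))) t) /
        (deriv (fun s => ν * (1 - V s)) t) + ν) / β ∧
      V t = 1 - (ν * (1 - V t)) / ν := by
  obtain ⟨⟨hS0, hS1⟩, ⟨hI0, hI1⟩, ⟨hV0, hV1⟩, hN0⟩ := h0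
  have hScont : Continuous S := by
    exact continuous_iff_continuousAt.2 fun t => (hS t).differentiableAt.continuousAt
  have hIcont : Continuous I := by
    exact continuous_iff_continuousAt.2 fun t => (hI t).differentiableAt.continuousAt
  -- S positive everywhere
  have hSpos : ∀ t, 0 < S t := by
    apply pos_of_linear_ode (fun t => -β * I t - ν)
    · exact ((continuous_const.mul hIcont).sub continuous_const)
    · intro t
      convert hS t using 1
      ring
    · exact hS0
  -- I positive everywhere
  have hIpos : ∀ t, 0 < I t := by
    apply pos_of_linear_ode (fun t => β * S t - γ)
    · exact ((continuous_const.mul hScont).sub continuous_const)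
    · intro t
      convert hI t using 1
      ring
    · exact hI0
  -- V monotone
  have hVmono : Monotone V := by
    apply monotone_of_deriv_nonneg (fun t => (hV t).differentiableAt)
    intro t
    rw [(hV t).deriv]
    exact le_of_lt (mul_pos hν (hSpos t))
  -- N = S + I + V antitone
  have hNanti : Antitone (fun t => S t + I t + V t) := by
    apply antitone_of_deriv_nonpos
    · exact fun t => (((hS t).add (hI t)).add (hV t)).differentiableAt
    · intro t
      rw [show deriv (fun t => S t + I t + V t) t = _ from (((hS t).add (hI t)).add (hV t)).deriv]
      nlinarith [hIpos t, hSpos t]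
  intro t ht
  have hVt : 0 ≤ V t := le_trans hV0 (hVmono ht)
  have hNt : S t + I t + V t ≤ 1 := le_trans (hNanti ht) hN0
  have hSt := hSpos t
  have hIt := hIpos t
  -- first derivative of y
  have hy : ∀ u, HasDerivAt (fun s => ν * (1 - V s)) (-ν ^ 2 * S u) u := by
    intro u
    have := ((hasDerivAt_const u (1:ℝ)).sub (hV u)).const_mul ν
    refine (this : HasDerivAt (fun s => ν * (1 - V s)) _ u).congr_deriv ?_
    ring
  have hyderiv : deriv (fun s => ν * (1 - V s)) = fun u => -ν ^ 2 * S u :=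
    funext fun u => (hy u).deriv
  have hy2 : deriv (deriv (fun s => ν * (1 - V s))) t =
      -ν ^ 2 * (-β * S t * I t - ν * S t) := by
    rw [hyderiv]
    exact ((hS t).const_mul (-ν ^ 2)).deriv
  have h1 : deriv (fun s => ν * (1 - V s)) t = -ν ^ 2 * S t := (hy t).deriv
  have hylt : deriv (fun s => ν * (1 - V s)) t < 0 := by
    rw [h1]; nlinarith [mul_pos (pow_pos hν 2) (hSpos t)]
  have hyne : deriv (fun s => ν * (1 - V s)) t ≠ 0 := ne_of_lt hylt
  refine ⟨⟨⟨hSt, by nlinarith⟩, ⟨hIt, by nlinarith⟩, ⟨hVt, by nlinarith⟩, hNt⟩, h1, ?_, hylt, ?_, ?_, ?_⟩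
  · rw [hy2, h1]; ring
  · rw [h1]; field_simp
  · rw [hy2, h1]
    field_simp
    ring
  · field_simp
    ring
end

section
/- For the SIR model with demography (normalized population) Ṡ = δ − βSI − δS, İ = βSI − (γ+δ)I and output y = kI, with y > 0 on the interval considered, the following identity holds along solutions: ÿ − ẏ²/y = y·δ(β − δ − γ) − y²·(β/k)(γ + δ) − ẏ·δ − yẏ·(β/k), with S = (ẏ/y + γ + δ)/β and I = y/k. Moreover, the map r(k, β, γ, δ) = (δ(β−γ−δ), (β/k)(γ+δ), δ, (β/k)) is injective on (0,1] × (0,∞)³. -/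
theorem stmt18 (k β γ δ a b : ℝ) (hk : k ∈ Set.Ioc (0 : ℝ) 1)
    (hβ : 0 < β) (hγ : 0 < γ) (hδ : 0 < δ) (hab : a < b)
    (S I : ℝ → ℝ)
    (hS : ∀ t ∈ Set.Ioo a b, HasDerivAt S (δ - β * S t * I t - δ * S t) t)
    (hI : ∀ t ∈ Set.Ioo a b, HasDerivAt I (β * S t * I t - (γ + δ) * I t) t)
    (hIpos : ∀ t ∈ Set.Ioo a b, 0 < I t) :
    (∀ t ∈ Set.Ioo a b,
      deriv (deriv (fun s => k * I s)) t - (deriv (fun s => k * I s) t) ^ 2 / (k * I t) =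
        (k * I t) * (δ * (β - δ - γ)) - (k * I t) ^ 2 * (β / k * (γ + δ))
          - deriv (fun s => k * I s) t * δ
          - (k * I t) * deriv (fun s => k * I s) t * (β / k) ∧
      S t = (deriv (fun s => k * I s) t / (k * I t) + γ + δ) / β) ∧
    -- r(k, β, γ, δ) = (δ(β−γ−δ), (β/k)(γ+δ), δ, β/k) is injective on (0,1] × (0,∞)³
    Set.InjOn
      (fun p : ℝ × ℝ × ℝ × ℝ =>
        (p.2.2.2 * (p.2.1 - p.2.2.1 - p.2.2.2), p.2.1 / p.1 * (p.2.2.1 + p.2.2.2),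
          p.2.2.2, p.2.1 / p.1))
      {p : ℝ × ℝ × ℝ × ℝ | p.1 ∈ Set.Ioc (0 : ℝ) 1 ∧ 0 < p.2.1 ∧ 0 < p.2.2.1 ∧
        0 < p.2.2.2} := by
  obtain ⟨hk0, hk1⟩ := hk
  constructor
  · intro t ht
    -- first derivative of y = k * I
    have hderiv : ∀ u ∈ Set.Ioo a b,
        HasDerivAt (fun s => k * I s) (k * (β * S u * I u - (γ + δ) * I u)) u := by
      intro u hu
      exact (hI u hu).const_mul k
    have hd1 : deriv (fun s => k * I s) t = k * (β * S t * I t - (γ + δ) * I t) :=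
      (hderiv t ht).deriv
    -- deriv of y equals g on Ioo
    have heq : deriv (fun s => k * I s) =ᶠ[nhds t]
        (fun u => k * (β * S u * I u - (γ + δ) * I u)) := by
      filter_upwards [Ioo_mem_nhds ht.1 ht.2] with u hu
      exact (hderiv u hu).deriv
    -- derivative of g at t
    have hg : HasDerivAt (fun u => k * (β * S u * I u - (γ + δ) * I u))
        (k * (β * ((δ - β * S t * I t - δ * S t) * I t +
          S t * (β * S t * I t - (γ + δ) * I t)) -
          (γ + δ) * (β * S t * I t - (γ + δ) * I t))) t := by
      have h1 : HasDerivAt (fun u => β * S u * I u)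
          (β * ((δ - β * S t * I t - δ * S t) * I t +
            S t * (β * S t * I t - (γ + δ) * I t))) t := by
        have h := ((hS t ht).mul (hI t ht)).const_mul β
        simp only [Pi.mul_apply, ← mul_assoc] at h
        convert h using 1
      exact (h1.sub ((hI t ht).const_mul (γ + δ))).const_mul k
    have hd2 : deriv (deriv (fun s => k * I s)) t =
        k * (β * ((δ - β * S t * I t - δ * S t) * I t +
          S t * (β * S t * I t - (γ + δ) * I t)) -
          (γ + δ) * (β * S t * I t - (γ + δ) * I t)) := by
      rw [Filter.EventuallyEq.deriv_eq heq]
      exact hg.deriv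
    have hI0 : I t ≠ 0 := (hIpos t ht).ne'
    have hk0' : k ≠ 0 := hk0.ne'
    rw [hd1, hd2]
    constructor
    · field_simp
      ring
    · field_simp
      ring
  · rintro ⟨k₁, β₁, γ₁, δ₁⟩ ⟨⟨hk₁0, _⟩, hβ₁, hγ₁, hδ₁⟩
      ⟨k₂, β₂, γ₂, δ₂⟩ ⟨⟨hk₂0, _⟩, hβ₂, hγ₂, hδ₂⟩ h
    simp only [Prod.mk.injEq] at h
    obtain ⟨h1, h2, h3, h4⟩ := h
    subst h3
    have h4' : β₁ / k₁ ≠ 0 := by positivity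
    rw [← h4] at h2
    have hsum := mul_left_cancel₀ h4' h2
    have hγeq : γ₁ = γ₂ := by linarith
    subst hγeq
    have hβeq : β₁ = β₂ := by
      have := mul_left_cancel₀ hδ₁.ne' h1
      linarith
    subst hβeq
    have hkeq : k₁ = k₂ := by
      field_simp at h4
      exact h4.symm
    simp [hkeq]
end

section
/- Let (S(t), I(t)) be a solution of the SIRS system Ṡ = −βSI + μ(1−S−I), İ = βSI − γI with β, γ, μ > 0 staying in Ω_θ = {(ξ₁,ξ₂) ∈ [0,1)×(0,1] : ξ₁+ξ₂ ≤ 1} \ {P_e}, and let y = kI with k ∈ (0,1]. Then the three functions d/dt(ẏ/y), y, ẏ are linearly independent on any interval [a,b): a₁·d/dt(ẏ/y) + a₂·y + a₃·ẏ ≡ 0 on [a,b) implies a₁ = a₂ = a₃ = 0. In contrast, for any solution of the SIR system (μ = 0) with I > 0, these three functions are linearly dependent on every interval. -/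
open Filter Set Polynomial

lemma aux_deriv_ratio (k β γ : ℝ) (hk : k ≠ 0) (S I f : ℝ → ℝ)
    (hS : ∀ t, HasDerivAt S (f t) t)
    (hI : ∀ t : ℝ, HasDerivAt I (β * S t * I t - γ * I t) t)
    (t : ℝ) (ht : 0 < I t) :
    deriv (fun s => deriv (fun u => k * I u) s / (k * I s)) t = β * f t := by
  have hcont : ContinuousAt I t := (hI t).continuousAt
  have hev : ∀ᶠ s in nhds t, I s ∈ Set.Ioi (0:ℝ) :=
    hcont.eventually_mem (isOpen_Ioi.mem_nhds ht)
  have heq : (fun s => deriv (fun u => k * I u) s / (k * I s))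
      =ᶠ[nhds t] fun s => β * S s - γ := by
    filter_upwards [hev] with s hs
    rw [show deriv (fun u => k * I u) s = k * (β * S s * I s - γ * I s) from
      ((hI s).const_mul k).deriv]
    have hIs : I s ≠ 0 := ne_of_gt hs
    field_simp
  rw [heq.deriv_eq]
  exact (((hS t).const_mul β).sub_const γ).deriv

lemma aux_key (β γ μ : ℝ) (hβ : 0 < β) (hγ : 0 < γ) (hμ : 0 < μ)
    (S I : ℝ → ℝ)
    (hS : ∀ t, HasDerivAt S (-β * S t * I t + μ * (1 - S t - I t)) t)
    (hI : ∀ t, HasDerivAt I (β * S t * I t - γ * I t) t)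
    (hSnn : ∀ t ∈ Set.Ici (0:ℝ), 0 ≤ S t)
    (hIpos : ∀ t ∈ Set.Ici (0:ℝ), 0 < I t)
    (hne : ∀ t ∈ Set.Ici (0:ℝ), (S t, I t) ≠ (γ / β, μ * (1 - γ / β) / (γ + μ)))
    (a b : ℝ) (ha : 0 ≤ a) (hab : a < b) (A C D : ℝ)
    (hP : ∀ t ∈ Set.Ico a b, A * (1 - S t) + (C + D * S t) * I t = 0) :
    A = 0 ∧ C = 0 ∧ D = 0 := by
  by_cases hSc : ∃ t₁ ∈ Set.Ioo a b, ∃ t₂ ∈ Set.Ioo a b, S t₁ ≠ S t₂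
  · -- non-constant case
    obtain ⟨t₁, ht₁, t₂, ht₂, hne12⟩ := hSc
    -- derivative of the relation along the flow
    have hE : ∀ t ∈ Set.Ioo a b,
        -A * (-β * S t * I t + μ * (1 - S t - I t)) + C * (β * S t * I t - γ * I t)
          + D * ((-β * S t * I t + μ * (1 - S t - I t)) * I t
              + S t * (β * S t * I t - γ * I t)) = 0 := by
      intro t ht
      have h₂ : HasDerivAt (fun s => A * (1 - S s))
          (A * -(-β * S t * I t + μ * (1 - S t - I t))) t :=
        ((hS t).const_sub 1).const_mul A
      have h₃ : HasDerivAt (fun s => C + D * S s)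
          (D * (-β * S t * I t + μ * (1 - S t - I t))) t :=
        ((hS t).const_mul D).const_add C
      have h₄ := h₃.mul (hI t)
      have h₅ := h₂.add h₄
      have hder : HasDerivAt (fun s => A * (1 - S s) + (C + D * S s) * I s)
          (-A * (-β * S t * I t + μ * (1 - S t - I t)) + C * (β * S t * I t - γ * I t)
            + D * ((-β * S t * I t + μ * (1 - S t - I t)) * I t
                + S t * (β * S t * I t - γ * I t))) t := by
        exact h₅.congr_deriv (by ring)
      have hev : (fun s => A * (1 - S s) + (C + D * S s) * I s) =ᶠ[nhds t] (fun _ => 0) :=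
        Filter.eventuallyEq_of_mem (Ioo_mem_nhds ht.1 ht.2)
          (fun s hs => hP s (Set.Ioo_subset_Ico_self hs))
      have hz : deriv (fun s => A * (1 - S s) + (C + D * S s) * I s) t = 0 := by
        rw [hev.deriv_eq]; simp
      rw [hder.deriv] at hz
      exact hz
    -- divide by I
    have hR : ∀ t ∈ Set.Ioo a b,
        (μ * C + A * μ - C * γ + D * μ)
          + (μ * D + A * β + C * β - D * μ - D * γ) * S t
          + D * β * (S t) ^ 2 - D * (μ + β * S t) * I t = 0 := by
      intro t ht
      have hIt : 0 < I t := hIpos t (le_trans ha (le_of_lt ht.1))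
      have h1 := hE t ht
      have h2 := hP t (Set.Ioo_subset_Ico_self ht)
      have h3 : I t * ((μ * C + A * μ - C * γ + D * μ)
          + (μ * D + A * β + C * β - D * μ - D * γ) * S t
          + D * β * (S t) ^ 2 - D * (μ + β * S t) * I t) = 0 := by
        linear_combination h1 + μ * h2
      rcases mul_eq_zero.mp h3 with h | h
      · exact absurd h hIt.ne'
      · exact h
    -- the cubic polynomial
    have hroot : ∀ t ∈ Set.Ioo a b,
        (C * (μ * C + A * μ - C * γ + D * μ) + A * D * μ)
          + (C * (μ * D + A * β + C * β - D * μ - D * γ)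
              + D * (μ * C + A * μ - C * γ + D * μ) + A * D * (β - μ)) * S t
          + (C * D * β + D * (μ * D + A * β + C * β - D * μ - D * γ) - A * D * β) * (S t) ^ 2
          + (D ^ 2 * β) * (S t) ^ 3 = 0 := by
      intro t ht
      linear_combination (C + D * S t) * hR t ht
        + D * (μ + β * S t) * hP t (Set.Ioo_subset_Ico_self ht)
    -- S takes infinitely many values
    have hsub : Set.uIcc t₁ t₂ ⊆ Set.Ioo a b := by
      intro x hx
      rcases Set.mem_uIcc.mp hx with ⟨h1, h2⟩ | ⟨h1, h2⟩ <;>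
        exact ⟨by linarith [ht₁.1, ht₂.1], by linarith [ht₁.2, ht₂.2]⟩
    have hctsS : ContinuousOn S (Set.uIcc t₁ t₂) :=
      fun x _ => (hS x).continuousAt.continuousWithinAt
    have hIVT := intermediate_value_uIcc hctsS
    set q : Polynomial ℝ :=
      Polynomial.C (C * (μ * C + A * μ - C * γ + D * μ) + A * D * μ)
        + Polynomial.C (C * (μ * D + A * β + C * β - D * μ - D * γ)
            + D * (μ * C + A * μ - C * γ + D * μ) + A * D * (β - μ)) * Polynomial.X
        + Polynomial.C (C * D * β + D * (μ * D + A * β + C * β - D * μ - D * γ)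
            - A * D * β) * Polynomial.X ^ 2
        + Polynomial.C (D ^ 2 * β) * Polynomial.X ^ 3 with hq
    have huIccInf : (Set.uIcc (S t₁) (S t₂)).Infinite := by
      rw [Set.uIcc]
      exact Set.infinite_coe_iff.mp (Set.Icc.infinite (inf_lt_sup.mpr hne12))
    have hinf : {x | q.IsRoot x}.Infinite := by
      refine huIccInf.mono ?_
      intro s hs
      obtain ⟨x, hx, rfl⟩ := hIVT hs
      have := hroot x (hsub hx)
      simp only [Set.mem_setOf_eq, hq, Polynomial.IsRoot, Polynomial.eval_add,
        Polynomial.eval_mul, Polynomial.eval_pow, Polynomial.eval_C, Polynomial.eval_X]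
      linear_combination this
    have hq0 : q = 0 := Polynomial.eq_zero_of_infinite_isRoot q hinf
    have hD : D = 0 := by
      have h := congrArg (fun p => Polynomial.coeff p 3) hq0
      simp only [hq, Polynomial.coeff_add, Polynomial.coeff_C_mul, Polynomial.coeff_X_pow,
        Polynomial.coeff_C, Polynomial.coeff_X, Polynomial.coeff_zero] at h
      norm_num at h
      rcases h with h | h
      · exact h
      · exact absurd h hβ.ne'
    -- now affine relation
    have r1 := hR t₁ ht₁
    have r2 := hR t₂ ht₂
    rw [hD] at r1 r2
    have hAC : A + C = 0 := by
      have h5 : (A + C) * β * (S t₁ - S t₂) = 0 := by linear_combination r1 - r2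
      rcases mul_eq_zero.mp h5 with h | h
      · rcases mul_eq_zero.mp h with h' | h'
        · exact h'
        · exact absurd h' hβ.ne'
      · exact absurd (by linarith : S t₁ = S t₂) hne12
    have hA : A = 0 := by
      have h6 : A * γ = 0 := by linear_combination r1 + (γ - β * S t₁ - μ) * hAC
      rcases mul_eq_zero.mp h6 with h | h
      · exact h
      · exact absurd h hγ.ne'
    exact ⟨hA, by linarith, hD⟩
  · -- constant case: trajectory is the excluded equilibrium, contradiction
    exfalso
    push_neg at hSc
    have ht₀ : (a + b) / 2 ∈ Set.Ioo a b := ⟨by linarith, by linarith⟩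
    set t₀ := (a + b) / 2 with ht₀def
    have ht₀0 : t₀ ∈ Set.Ici (0:ℝ) := le_trans ha (le_of_lt ht₀.1)
    have hconst : ∀ s ∈ Set.Ioo a b, S s = S t₀ := fun s hs => hSc s hs t₀ ht₀
    have hS'zero : ∀ s ∈ Set.Ioo a b, -β * S s * I s + μ * (1 - S s - I s) = 0 := by
      intro s hs
      have hev : S =ᶠ[nhds s] (fun _ => S t₀) :=
        Filter.eventuallyEq_of_mem (Ioo_mem_nhds hs.1 hs.2) hconst
      have hz : deriv S s = 0 := by rw [hev.deriv_eq]; simp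
      rw [(hS s).deriv] at hz
      exact hz
    have hIconst : ∀ s ∈ Set.Ioo a b, I s = I t₀ := by
      intro s hs
      have h1 := hS'zero s hs
      have h2 := hS'zero t₀ ht₀
      rw [hconst s hs] at h1
      have h4 : (I s - I t₀) * (β * S t₀ + μ) = 0 := by linear_combination h2 - h1
      have hpos : 0 < β * S t₀ + μ := by
        have := hSnn t₀ ht₀0
        positivity
      rcases mul_eq_zero.mp h4 with h | h
      · linarith
      · exact absurd h hpos.ne'
    have hI'zero : β * S t₀ * I t₀ - γ * I t₀ = 0 := by
      have hev : I =ᶠ[nhds t₀] (fun _ => I t₀) :=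
        Filter.eventuallyEq_of_mem (Ioo_mem_nhds ht₀.1 ht₀.2) hIconst
      have hz : deriv I t₀ = 0 := by rw [hev.deriv_eq]; simp
      rw [(hI t₀).deriv] at hz
      exact hz
    have hIt₀ : 0 < I t₀ := hIpos t₀ ht₀0
    have hβS : β * S t₀ = γ := by
      have h : I t₀ * (β * S t₀ - γ) = 0 := by linear_combination hI'zero
      rcases mul_eq_zero.mp h with h' | h'
      · exact absurd h' hIt₀.ne'
      · linarith
    have e1 := hS'zero t₀ ht₀
    have hI0' : I t₀ * (γ + μ) * β = μ * (β - γ) := by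
      linear_combination (-β) * e1 - (β * I t₀ + μ) * hβS
    have hSeq : S t₀ = γ / β := by
      rw [eq_div_iff hβ.ne']
      linarith [hβS]
    have hIeq : I t₀ = μ * (1 - γ / β) / (γ + μ) := by
      rw [eq_div_iff (by positivity : γ + μ ≠ 0)]
      field_simp
      linear_combination hI0'
    exact hne t₀ ht₀0 (by rw [hSeq, hIeq])

theorem stmt19 (k β γ μ : ℝ) (hk : k ∈ Set.Ioc (0 : ℝ) 1)
    (hβ : 0 < β) (hγ : 0 < γ) (hμ : 0 < μ) :
    -- (a) SIRS case: for trajectories in Ω_θ = Ω₁ \ {P_e}, the functions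
    -- d/dt(ẏ/y), y, ẏ are linearly independent on any [a,b) ⊆ [0,∞)
    (∀ S I : ℝ → ℝ,
      (∀ t : ℝ, HasDerivAt S (-β * S t * I t + μ * (1 - S t - I t)) t) →
      (∀ t : ℝ, HasDerivAt I (β * S t * I t - γ * I t) t) →
      (∀ t ∈ Set.Ici (0 : ℝ),
        (S t ∈ Set.Ico (0 : ℝ) 1 ∧ I t ∈ Set.Ioc (0 : ℝ) 1 ∧ S t + I t ≤ 1) ∧
        (S t, I t) ≠ (γ / β, μ * (1 - γ / β) / (γ + μ))) →
      ∀ a b : ℝ, 0 ≤ a → a < b → ∀ a₁ a₂ a₃ : ℝ,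
        (∀ t ∈ Set.Ico a b,
          a₁ * deriv (fun s => deriv (fun u => k * I u) s / (k * I s)) t
            + a₂ * (k * I t) + a₃ * deriv (fun s => k * I s) t = 0) →
        a₁ = 0 ∧ a₂ = 0 ∧ a₃ = 0) ∧
    -- (b) SIR case (μ = 0): the same three functions are linearly dependent
    -- on every interval
    (∀ S I : ℝ → ℝ,
      (∀ t : ℝ, HasDerivAt S (-β * S t * I t) t) →
      (∀ t : ℝ, HasDerivAt I (β * S t * I t - γ * I t) t) →
      (∀ t : ℝ, 0 < I t) →
      ∀ a b : ℝ, a < b →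
        ∃ c₁ c₂ c₃ : ℝ, (c₁, c₂, c₃) ≠ ((0 : ℝ), (0 : ℝ), (0 : ℝ)) ∧
          ∀ t ∈ Set.Ico a b,
            c₁ * deriv (fun s => deriv (fun u => k * I u) s / (k * I s)) t
              + c₂ * (k * I t) + c₃ * deriv (fun s => k * I s) t = 0) := by
  have hk0 : k ≠ 0 := ne_of_gt hk.1
  constructor
  · intro S I hS hI hΩ a b ha hab a₁ a₂ a₃ hrel
    have hSnn : ∀ t ∈ Set.Ici (0:ℝ), 0 ≤ S t := fun t ht => ((hΩ t ht).1.1).1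
    have hIpos : ∀ t ∈ Set.Ici (0:ℝ), 0 < I t := fun t ht => ((hΩ t ht).1.2.1).1
    have hne : ∀ t ∈ Set.Ici (0:ℝ),
        (S t, I t) ≠ (γ / β, μ * (1 - γ / β) / (γ + μ)) := fun t ht => (hΩ t ht).2
    have hP : ∀ t ∈ Set.Ico a b,
        (a₁ * β * μ) * (1 - S t)
          + ((k * (a₂ - a₃ * γ) - a₁ * β * μ) + (β * (a₃ * k - a₁ * β)) * S t) * I t = 0 := by
      intro t ht
      have ht0 : (0:ℝ) ≤ t := le_trans ha ht.1
      have hIt : 0 < I t := hIpos t ht0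
      have h1 := aux_deriv_ratio k β γ hk0 S I
        (fun t => -β * S t * I t + μ * (1 - S t - I t)) hS hI t hIt
      have h2 : deriv (fun s => k * I s) t = k * (β * S t * I t - γ * I t) :=
        ((hI t).const_mul k).deriv
      have h := hrel t ht
      rw [h1, h2] at h
      linear_combination h
    obtain ⟨hA, hC, hD⟩ := aux_key β γ μ hβ hγ hμ S I hS hI hSnn hIpos hne a b ha hab
      _ _ _ hP
    have ha₁ : a₁ = 0 := by
      have h : a₁ * (β * μ) = 0 := by linear_combination hA
      rcases mul_eq_zero.mp h with h' | h'
      · exact h'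
      · exact absurd h' (by positivity)
    have ha₃ : a₃ = 0 := by
      have h : a₃ * (β * k) = 0 := by linear_combination hD + β ^ 2 * ha₁
      rcases mul_eq_zero.mp h with h' | h'
      · exact h'
      · exact absurd h' (by positivity)
    have ha₂ : a₂ = 0 := by
      have h : a₂ * k = 0 := by linear_combination hC + k * γ * ha₃ + β * μ * ha₁
      rcases mul_eq_zero.mp h with h' | h'
      · exact h'
      · exact absurd h' hk0
    exact ⟨ha₁, ha₂, ha₃⟩
  · intro S I hS hI hIpos a b hab
    refine ⟨k, β * γ, β, ?_, ?_⟩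
    · intro hc
      rw [Prod.mk.injEq, Prod.mk.injEq] at hc
      exact hk0 hc.1
    · intro t ht
      have h1 := aux_deriv_ratio k β γ hk0 S I (fun t => -β * S t * I t) hS hI t (hIpos t)
      have h2 : deriv (fun s => k * I s) t = k * (β * S t * I t - γ * I t) :=
        ((hI t).const_mul k).deriv
      rw [h1, h2]
      ring
end
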